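/- arXiv:0810.3176 — 4 statements merged into one kernel-verified Lean document; each statement's English description precedes it below -/
import Mathlib

section
/- Let Λ = {1,…,m} with m ≥ 2, T > 0, and let h_{i,j} : [0,T]×ℝ → ℝ (for i,j ∈ Λ) be nondecreasing in y and satisfy h_{i,j}(t,y) ≤ y for all t,y (Hypothesis 2). Assume Hypothesis 5: h_{i,j}(t, h_{j,l}(t,y)) < h_{i,l}(t,y) for all i ≠ j, j ≠ l, t ∈ [0,T], y ∈ ℝ. Then Hypothesis 3 (no free loop) holds: for every n ≥ 2, every loop i_1,…,i_n in Λ with i_1 = i_n and i_k ≠ i_{k+1} for k = 1,…,n−1, every t ∈ [0,T], and all reals y_1,…,y_n with y_k = h_{i_k,i_{k+1}}(t, y_{k+1}) for k = 1,…,n−1, one has y_1 < y_n. -/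
/-- If the penalty functions `h i j : [0,T] × ℝ → ℝ` satisfy
Hypothesis 2 (nondecreasing in `y` and `h i j t y ≤ y`) and Hypothesis 5
(`h i j t (h j l t y) < h i l t y` for `i ≠ j`, `j ≠ l`), then the
no-free-loop property (Hypothesis 3) holds. -/
theorem stmt_1 (m : ℕ) (hm : 2 ≤ m) (T : ℝ) (hT : 0 < T)
    (h : Fin m → Fin m → ℝ → ℝ → ℝ)
    (hyp2_mono : ∀ (i j : Fin m), ∀ t ∈ Set.Icc (0:ℝ) T, Monotone (h i j t))
    (hyp2_le : ∀ (i j : Fin m), ∀ t ∈ Set.Icc (0:ℝ) T, ∀ y : ℝ, h i j t y ≤ y)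
    (hyp5 : ∀ (i j l : Fin m), i ≠ j → j ≠ l → ∀ t ∈ Set.Icc (0:ℝ) T, ∀ y : ℝ,
       h i j t (h j l t y) < h i l t y) :
    ∀ n : ℕ, 2 ≤ n → ∀ (idx : ℕ → Fin m) (y : ℕ → ℝ), ∀ t ∈ Set.Icc (0:ℝ) T,
      idx 0 = idx (n - 1) →
      (∀ kk : ℕ, kk < n - 1 → idx kk ≠ idx (kk + 1)) →
      (∀ kk : ℕ, kk < n - 1 → y kk = h (idx kk) (idx (kk + 1)) t (y (kk + 1))) →
      y 0 < y (n - 1) := by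
  intro n hn idx y t ht hloop hadj hrec
  by_cases h2 : n = 2
  · subst h2
    exact absurd hloop (hadj 0 (by norm_num))
  have hn3 : 3 ≤ n := by omega
  have key : ∀ k, 1 ≤ k → k ≤ n - 1 → y 0 ≤ h (idx 0) (idx k) t (y k) := by
    intro k
    induction k with
    | zero => omega
    | succ k ih =>
      intro _ hk1
      by_cases hk0 : k = 0
      · subst hk0
        exact le_of_eq (hrec 0 (by omega))
      · have hklt : k < n - 1 := by omega
        have h1 : y 0 ≤ h (idx 0) (idx k) t (y k) := ih (by omega) (by omega)
        have hstep : y k = h (idx k) (idx (k+1)) t (y (k+1)) := hrec k hklt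
        by_cases he : idx 0 = idx k
        · calc y 0 ≤ h (idx 0) (idx k) t (y k) := h1
            _ ≤ y k := hyp2_le _ _ t ht _
            _ = h (idx k) (idx (k+1)) t (y (k+1)) := hstep
            _ = h (idx 0) (idx (k+1)) t (y (k+1)) := by rw [he]
        · calc y 0 ≤ h (idx 0) (idx k) t (y k) := h1
            _ = h (idx 0) (idx k) t (h (idx k) (idx (k+1)) t (y (k+1))) := by rw [← hstep]
            _ ≤ h (idx 0) (idx (k+1)) t (y (k+1)) :=
              le_of_lt (hyp5 _ _ _ he (hadj k hklt) t ht _)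
  have he2 : n - 2 + 1 = n - 1 := by omega
  have hfin : y 0 ≤ h (idx 0) (idx (n-2)) t (y (n-2)) := key (n-2) (by omega) (by omega)
  have hr : y (n-2) = h (idx (n-2)) (idx (n-2+1)) t (y (n-2+1)) := hrec (n-2) (by omega)
  have hadj' : idx (n-2) ≠ idx (n-2+1) := hadj (n-2) (by omega)
  have hne : idx 0 ≠ idx (n-2) := by
    rw [hloop, ← he2]
    exact fun hh => hadj' hh.symm
  calc y 0 ≤ h (idx 0) (idx (n-2)) t (y (n-2)) := hfin
    _ = h (idx 0) (idx (n-2)) t (h (idx (n-2)) (idx (n-2+1)) t (y (n-2+1))) := by rw [← hr]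
    _ < h (idx 0) (idx (n-2+1)) t (y (n-2+1)) := hyp5 _ _ _ hne hadj' t ht _
    _ ≤ y (n-2+1) := hyp2_le _ _ t ht _
    _ = y (n-1) := by rw [he2]
end

section
/- Let Λ = {1,…,m} be a finite set, T > 0, and let h_{i,j} : [0,T]×ℝ → ℝ (for i,j ∈ Λ) satisfy Hypothesis 3 (no free loop). Fix t ∈ [0,T] and v : Λ → ℝ. Then there exists no infinite sequence (i_k)_{k ≥ 1} in Λ such that i_{k+1} ≠ i_k and v(i_k) = h_{i_k, i_{k+1}}(t, v(i_{k+1})) for every k ≥ 1. -/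
/-- Under the no-free-loop property (Hypothesis 3), for fixed
`t ∈ [0,T]` and `v : Λ → ℝ` there is no infinite sequence `seq` of regimes
with `seq (k+1) ≠ seq k` and `v (seq k) = h (seq k) (seq (k+1)) t (v (seq (k+1)))`
for every `k`. -/
theorem stmt_3 (m : ℕ) (T : ℝ) (hT : 0 < T)
    (h : Fin m → Fin m → ℝ → ℝ → ℝ)
    (hyp3 : ∀ t ∈ Set.Icc (0:ℝ) T, ∀ n : ℕ, 2 ≤ n →
      ∀ (idx : ℕ → Fin m) (y : ℕ → ℝ),
      idx 0 = idx (n - 1) →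
      (∀ kk : ℕ, kk < n - 1 → idx kk ≠ idx (kk + 1)) →
      (∀ kk : ℕ, kk < n - 1 → y kk = h (idx kk) (idx (kk + 1)) t (y (kk + 1))) →
      y 0 < y (n - 1))
    (t : ℝ) (ht : t ∈ Set.Icc (0:ℝ) T) (v : Fin m → ℝ) :
    ¬ ∃ seq : ℕ → Fin m, ∀ kk : ℕ,
        seq (kk + 1) ≠ seq kk ∧
        v (seq kk) = h (seq kk) (seq (kk + 1)) t (v (seq (kk + 1))) := by
  rintro ⟨seq, hseq⟩
  obtain ⟨a, b, hne, heq⟩ := Finite.exists_ne_map_eq_of_infinite seq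
  wlog hab : a < b generalizing a b
  · exact this b a hne.symm heq.symm (by omega)
  have key := hyp3 t ht (b - a + 1) (by omega) (fun k => seq (a + k))
      (fun k => v (seq (a + k)))
      (by simp only [Nat.add_sub_cancel]
          rw [Nat.add_zero, Nat.add_sub_cancel' hab.le]; exact heq)
      (fun kk hkk => by
        have := (hseq (a + kk)).1
        simpa [Nat.add_assoc] using this.symm)
      (fun kk hkk => by
        have := (hseq (a + kk)).2
        simpa [Nat.add_assoc] using this)
  simp only [Nat.add_sub_cancel, Nat.add_zero, Nat.add_sub_cancel' hab.le] at key
  rw [heq] at key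
  exact lt_irrefl _ key
end

section
/- Let m, d ≥ 1, C > 0, n ∈ ℕ, and for each i ∈ Λ = {1,…,m} let ψ(·,·,i) : ℝ×ℝ^d → ℝ satisfy |ψ(y,z,i) − ψ(y',z',i)| ≤ C(|y−y'| + |z−z'|) for all y,y',z,z'. Let k : Λ×Λ → ℝ, and define ψ̄ⁿ(y,z)_i = ψ(y_i, z_i, i) + n·∑_{l=1}^m (y_i − y_l + k(i,l))⁻ for y ∈ ℝ^m, z ∈ ℝ^{m×d}. Then for all y, y' ∈ ℝ^m and z, z' ∈ ℝ^{m×d}: −4⟨y⁻, ψ̄^{n+1}(y⁺ + y', z) − ψ̄ⁿ(y', z')⟩ ≤ 2·∑_{i=1}^m 1_{{y_i < 0}} |z_i − z'_i|² + 2C²|y⁻|². -/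
/-- Cross-level structural inequality for the penalized
generators: `-4⟨y⁻, ψ̄ⁿ⁺¹(y⁺+y',z) - ψ̄ⁿ(y',z')⟩ ≤
2 ∑ᵢ 1_{yᵢ<0}|zᵢ-z'ᵢ|² + 2C²|y⁻|²`. -/
theorem stmt_7 (m d : ℕ) (hm : 1 ≤ m) (hd : 1 ≤ d) (C : ℝ) (hC : 0 < C)
    (n : ℕ)
    (ψ : ℝ → (Fin d → ℝ) → Fin m → ℝ)
    (hLip : ∀ (i : Fin m) (y y' : ℝ) (z z' : Fin d → ℝ),
      |ψ y z i - ψ y' z' i| ≤ C * (|y - y'| + Real.sqrt (∑ j, (z j - z' j)^2)))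
    (k : Fin m → Fin m → ℝ)
    (y y' : Fin m → ℝ) (z z' : Fin m → Fin d → ℝ) :
    -4 * ∑ i, max (-(y i)) 0 *
        ((ψ (max (y i) 0 + y' i) (z i) i
            + ((n : ℝ) + 1) * ∑ l, max (-((max (y i) 0 + y' i) - (max (y l) 0 + y' l) + k i l)) 0)
          - (ψ (y' i) (z' i) i
            + (n : ℝ) * ∑ l, max (-(y' i - y' l + k i l)) 0))
      ≤ 2 * ∑ i, (if y i < 0 then (1:ℝ) else 0) * (∑ j, (z i j - z' i j)^2)
        + 2 * C^2 * ∑ i, (max (-(y i)) 0)^2 := by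
  have key : ∀ i ∈ Finset.univ, -4 * (max (-(y i)) 0 *
        ((ψ (max (y i) 0 + y' i) (z i) i
            + ((n : ℝ) + 1) * ∑ l, max (-((max (y i) 0 + y' i) - (max (y l) 0 + y' l) + k i l)) 0)
          - (ψ (y' i) (z' i) i
            + (n : ℝ) * ∑ l, max (-(y' i - y' l + k i l)) 0)))
      ≤ 2 * ((if y i < 0 then (1:ℝ) else 0) * (∑ j, (z i j - z' i j)^2))
        + 2 * C^2 * (max (-(y i)) 0)^2 := by
    intro i _
    by_cases hi : y i < 0
    · have hyp : max (y i) 0 = 0 := max_eq_right (le_of_lt hi)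
      set b : ℝ := max (-(y i)) 0 with hbdef
      have hb0 : 0 ≤ b := le_max_right _ _
      set S : ℝ := ∑ j, (z i j - z' i j)^2 with hSdef
      have hS0 : 0 ≤ S := Finset.sum_nonneg fun j _ => sq_nonneg _
      have hsq : Real.sqrt S ^ 2 = S := Real.sq_sqrt hS0
      have hsqrt0 : 0 ≤ Real.sqrt S := Real.sqrt_nonneg _
      -- ψ part
      have hψ : |ψ (max (y i) 0 + y' i) (z i) i - ψ (y' i) (z' i) i|
          ≤ C * Real.sqrt S := by
        rw [hyp, zero_add]
        have := hLip i (y' i) (y' i) (z i) (z' i)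
        simpa using this
      -- penalty part
      have hP : (n : ℝ) * ∑ l, max (-(y' i - y' l + k i l)) 0
          ≤ ((n : ℝ) + 1) * ∑ l, max (-((max (y i) 0 + y' i) - (max (y l) 0 + y' l) + k i l)) 0 := by
        have hterm : ∀ l : Fin m, max (-(y' i - y' l + k i l)) 0
            ≤ max (-((max (y i) 0 + y' i) - (max (y l) 0 + y' l) + k i l)) 0 := by
          intro l
          have h1 : (max (y i) 0 + y' i) - (max (y l) 0 + y' l) + k i l
              ≤ y' i - y' l + k i l := by
            have := le_max_right (y l) 0
            rw [hyp]
            nlinarith [le_max_right (y l) 0]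
          exact max_le_max (neg_le_neg h1) le_rfl
        have hsum : ∑ l, max (-(y' i - y' l + k i l)) 0
            ≤ ∑ l, max (-((max (y i) 0 + y' i) - (max (y l) 0 + y' l) + k i l)) 0 :=
          Finset.sum_le_sum fun l _ => hterm l
        have hs0 : 0 ≤ ∑ l, max (-((max (y i) 0 + y' i) - (max (y l) 0 + y' l) + k i l)) 0 :=
          Finset.sum_nonneg fun l _ => le_max_right _ _
        have hn0 : (0:ℝ) ≤ (n:ℝ) := Nat.cast_nonneg n
        nlinarith [mul_le_mul_of_nonneg_left hsum hn0]
      set D : ℝ := ψ (max (y i) 0 + y' i) (z i) i - ψ (y' i) (z' i) i with hD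
      set P : ℝ := ((n : ℝ) + 1) * ∑ l, max (-((max (y i) 0 + y' i) - (max (y l) 0 + y' l) + k i l)) 0
          - (n : ℝ) * ∑ l, max (-(y' i - y' l + k i l)) 0 with hPdef
      have hP0 : 0 ≤ P := by rw [hPdef]; linarith
      have hDle : -D ≤ C * Real.sqrt S := by
        have := abs_le.mp hψ; linarith [this.1]
      have hind : (if y i < 0 then (1:ℝ) else 0) = 1 := if_pos hi
      rw [hind]
      have hgoal : -4 * (b * (D + P)) ≤ 2 * (1 * S) + 2 * C^2 * b^2 := by
        nlinarith [mul_nonneg hb0 hP0, mul_le_mul_of_nonneg_left hDle hb0,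
          sq_nonneg (Real.sqrt S - C * b), hsq]
      convert hgoal using 2
      ring
    · have hb : max (-(y i)) 0 = 0 := max_eq_right (by linarith)
      rw [hb, if_neg hi]
      simp
  calc -4 * ∑ i, max (-(y i)) 0 *
        ((ψ (max (y i) 0 + y' i) (z i) i
            + ((n : ℝ) + 1) * ∑ l, max (-((max (y i) 0 + y' i) - (max (y l) 0 + y' l) + k i l)) 0)
          - (ψ (y' i) (z' i) i
            + (n : ℝ) * ∑ l, max (-(y' i - y' l + k i l)) 0))
      = ∑ i, -4 * (max (-(y i)) 0 *
        ((ψ (max (y i) 0 + y' i) (z i) i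
            + ((n : ℝ) + 1) * ∑ l, max (-((max (y i) 0 + y' i) - (max (y l) 0 + y' l) + k i l)) 0)
          - (ψ (y' i) (z' i) i
            + (n : ℝ) * ∑ l, max (-(y' i - y' l + k i l)) 0))) := Finset.mul_sum _ _ _
    _ ≤ ∑ i, (2 * ((if y i < 0 then (1:ℝ) else 0) * (∑ j, (z i j - z' i j)^2))
        + 2 * C^2 * (max (-(y i)) 0)^2) := Finset.sum_le_sum key
    _ = 2 * ∑ i, (if y i < 0 then (1:ℝ) else 0) * (∑ j, (z i j - z' i j)^2)
        + 2 * C^2 * ∑ i, (max (-(y i)) 0)^2 := by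
        rw [Finset.sum_add_distrib, ← Finset.mul_sum, ← Finset.mul_sum]
end

section
/- Let m, d ≥ 1, C > 0, n ∈ ℕ, S ∈ ℝ^m, and let φ : ℝ^m × ℝ^{m×d} → ℝ^m satisfy: −4⟨y⁻, φ(y⁺ + y', z) − φ(y', z')⟩ ≤ 2·∑_{i=1}^m 1_{{y_i < 0}} |z_i − z'_i|² + C|y⁻|² for all y, y' ∈ ℝ^m and z, z' ∈ ℝ^{m×d}. Define φⁿ(y,z) = φ(y,z) − n·(y − S)⁺, the positive part taken componentwise. Then for all y, y' ∈ ℝ^m and z, z' ∈ ℝ^{m×d}: −4⟨y⁻, φⁿ(y⁺ + y', z) − φ^{n+1}(y', z')⟩ ≤ 2·∑_{i=1}^m 1_{{y_i < 0}} |z_i − z'_i|² + C|y⁻|². -/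
/-- If a generator `φ` satisfies the structural comparison
condition with constant `C`, then so does the cross-level pair of barrier
penalizations `φⁿ(y,z) = φ(y,z) - n(y-S)⁺` and `φⁿ⁺¹`. -/
theorem stmt_8 (m d : ℕ) (hm : 1 ≤ m) (hd : 1 ≤ d) (C : ℝ) (hC : 0 < C)
    (n : ℕ) (S : Fin m → ℝ)
    (φ : (Fin m → ℝ) → (Fin m → Fin d → ℝ) → Fin m → ℝ)
    (hstruct : ∀ (y y' : Fin m → ℝ) (z z' : Fin m → Fin d → ℝ),
      -4 * ∑ i, max (-(y i)) 0 *
          (φ (fun i' => max (y i') 0 + y' i') z i - φ y' z' i)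
        ≤ 2 * ∑ i, (if y i < 0 then (1:ℝ) else 0) * (∑ j, (z i j - z' i j)^2)
          + C * ∑ i, (max (-(y i)) 0)^2)
    (y y' : Fin m → ℝ) (z z' : Fin m → Fin d → ℝ) :
    -4 * ∑ i, max (-(y i)) 0 *
        ((φ (fun i' => max (y i') 0 + y' i') z i
            - (n : ℝ) * max ((max (y i) 0 + y' i) - S i) 0)
          - (φ y' z' i - ((n : ℝ) + 1) * max (y' i - S i) 0))
      ≤ 2 * ∑ i, (if y i < 0 then (1:ℝ) else 0) * (∑ j, (z i j - z' i j)^2)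
        + C * ∑ i, (max (-(y i)) 0)^2 := by
  have h1 := hstruct y y' z z'
  have h2 : 0 ≤ ∑ i, max (-(y i)) 0 *
      (((n : ℝ) + 1) * max (y' i - S i) 0 - (n : ℝ) * max ((max (y i) 0 + y' i) - S i) 0) := by
    apply Finset.sum_nonneg
    intro i _
    rcases lt_or_ge (y i) 0 with h | h
    · have hy : max (y i) 0 = 0 := max_eq_right h.le
      rw [hy, zero_add]
      have hM : 0 ≤ max (y' i - S i) 0 := le_max_right _ _
      have ha : 0 ≤ max (-(y i)) 0 := le_max_right _ _
      nlinarith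
    · have : max (-(y i)) 0 = 0 := max_eq_right (by linarith)
      rw [this, zero_mul]
  have heq : -4 * ∑ i, max (-(y i)) 0 *
        ((φ (fun i' => max (y i') 0 + y' i') z i
            - (n : ℝ) * max ((max (y i) 0 + y' i) - S i) 0)
          - (φ y' z' i - ((n : ℝ) + 1) * max (y' i - S i) 0))
      = -4 * ∑ i, max (-(y i)) 0 *
          (φ (fun i' => max (y i') 0 + y' i') z i - φ y' z' i)
        + -4 * ∑ i, max (-(y i)) 0 *
          (((n : ℝ) + 1) * max (y' i - S i) 0 - (n : ℝ) * max ((max (y i) 0 + y' i) - S i) 0) := by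
    rw [← mul_add, ← Finset.sum_add_distrib]
    congr 1
    apply Finset.sum_congr rfl
    intro i _
    ring
  rw [heq]
  linarith
end
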